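/- arXiv:1504.00196 — 2 statements merged into one kernel-verified Lean document; each statement's English description precedes it below -/
import Mathlib

section
/- Let N ≥ 1, let 0 < θ₁ < θ₂ < ⋯ < θ_N, Ω > 0, γ > 0, and a_ℓ > 0 for ℓ = 1,…,N. Define the polynomial Q(s) = s ∏_{ℓ=1}^N (θ_ℓ + Ω - s) + γ (s - Ω) ∑_{ℓ=1}^N a_ℓ ∏_{k≠ℓ} (θ_k + Ω - s). Then Q has exactly N+1 real roots s₁ < s₂ < ⋯ < s_{N+1}, all positive, and they interlace with the shifted abscissae: 0 < s₁ < θ₁ + Ω < s₂ < θ₂ + Ω < ⋯ < s_N < θ_N + Ω < s_{N+1}. -/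
/-!
`Qpoly` is a real polynomial of degree `N + 1` with leading coefficient `(-1) ^ N`. It is
negative at `0`, its value `γ θ_ℓ a_ℓ ∏_{k ≠ ℓ} (θ_k - θ_ℓ)` at `θ_ℓ + Ω` has sign `(-1) ^ ℓ`
(indices starting at `0`), and `(-1) ^ N Q(M) > 0` for large `M`. Hence `Q` changes sign on each
of the `N + 1` intervals cut out by `0 < θ_0 + Ω < ⋯ < θ_{N-1} + Ω < M`; the intermediate value
theorem puts a root in each of them, and a polynomial of degree `N + 1` has no further roots.
-/

open Finset

/-- The polynomial `Q(s)` arising from the characteristic polynomial of the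
diffusive block of the Biot-DA relaxation matrix. -/
noncomputable def Qpoly (N : ℕ) (θ a : Fin N → ℝ) (γ Ω s : ℝ) : ℝ :=
  s * ∏ ℓ : Fin N, (θ ℓ + Ω - s) +
    γ * (s - Ω) * ∑ ℓ : Fin N, a ℓ * ∏ k ∈ Finset.univ.erase ℓ, (θ k + Ω - s)

open Polynomial Filter

lemma mul_neg_of_neg_one_pow_mul_pos {R : Type*} [CommRing R] [LinearOrder R]
    [IsStrictOrderedRing R] {u v : R} {k : ℕ} (hu : 0 < (-1) ^ k * u)
    (hv : 0 < (-1) ^ (k + 1) * v) : u * v < 0 := by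
  rw [pow_succ] at hv
  rcases neg_one_pow_eq_or R k with h | h <;> rw [h] at hu hv <;> nlinarith

lemma exists_mem_Ioo_eq_zero_of_mul_neg {f : ℝ → ℝ} (hf : Continuous f) {a b : ℝ}
    (hab : a < b) (h : f a * f b < 0) : ∃ t ∈ Set.Ioo a b, f t = 0 := by
  rcases mul_neg_iff.mp h with ⟨ha, hb⟩ | ⟨ha, hb⟩
  · exact intermediate_value_Ioo' hab.le hf.continuousOn ⟨hb, ha⟩
  · exact intermediate_value_Ioo hab.le hf.continuousOn ⟨ha, hb⟩

lemma exists_strictMono_zeros_of_sign_changes {n : ℕ} {f : ℝ → ℝ} (hf : Continuous f)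
    {x : Fin (n + 2) → ℝ} (hx : StrictMono x)
    (hsign : ∀ i : Fin (n + 1), f (x i.castSucc) * f (x i.succ) < 0) :
    ∃ s : Fin (n + 1) → ℝ, StrictMono s ∧
      ∀ i, f (s i) = 0 ∧ x i.castSucc < s i ∧ s i < x i.succ := by
  choose s hs hzero using fun i ↦
    exists_mem_Ioo_eq_zero_of_mul_neg hf (hx i.castSucc_lt_succ) (hsign i)
  refine ⟨s, Fin.strictMono_iff_lt_succ.2 fun i ↦ ?_, fun i ↦ ⟨hzero i, hs i⟩⟩
  calc s i.castSucc < x i.castSucc.succ := (hs _).2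
    _ = x i.succ.castSucc := by rw [Fin.succ_castSucc]
    _ < s i.succ := (hs _).1

lemma StrictMono.finSnoc {α : Type*} [Preorder α] {n : ℕ} {f : Fin n → α} {y : α}
    (hf : StrictMono f) (hy : ∀ j, f j < y) : StrictMono (Fin.snoc f y : Fin (n + 1) → α) := by
  intro i j hij
  induction j using Fin.lastCases with
  | last =>
    obtain ⟨i, rfl⟩ := Fin.exists_castSucc_eq.2 hij.ne
    simpa using hy i
  | cast j =>
    obtain ⟨i, rfl⟩ := Fin.exists_castSucc_eq.2 (hij.trans (Fin.castSucc_lt_last j)).ne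
    simpa using hf (Fin.castSucc_lt_castSucc_iff.1 hij)

lemma StrictMono.neg_one_pow_mul_prod_erase_sub_pos {R : Type*} [CommRing R] [LinearOrder R]
    [IsStrictOrderedRing R] {n : ℕ} {θ : Fin n → R} (hθ : StrictMono θ) (ℓ : Fin n) :
    0 < (-1) ^ (ℓ : ℕ) * ∏ k ∈ univ.erase ℓ, (θ k - θ ℓ) := by
  have hbelow : (univ.erase ℓ).filter (· < ℓ) = Iio ℓ := by
    ext k
    simpa using fun h : k < ℓ ↦ h.ne
  have hflip : ∏ k ∈ Iio ℓ, (θ k - θ ℓ) = (-1) ^ (ℓ : ℕ) * ∏ k ∈ Iio ℓ, (θ ℓ - θ k) := by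
    rw [← Fin.card_Iio ℓ, ← prod_neg]
    simp
  rw [← prod_filter_mul_prod_filter_not (univ.erase ℓ) (· < ℓ), hbelow, hflip, ← mul_assoc,
    ← mul_assoc, ← pow_add, Even.neg_one_pow ⟨_, rfl⟩, one_mul]
  refine mul_pos (prod_pos fun k hk ↦ sub_pos.2 (hθ (mem_Iio.1 hk))) (prod_pos fun k hk ↦ ?_)
  simp only [mem_filter, mem_erase, mem_univ, and_true, not_lt] at hk
  exact sub_pos.2 (hθ (hk.2.lt_of_ne hk.1.symm))

namespace Polynomial

lemma natDegree_C_sub_X {R : Type*} [Ring R] [Nontrivial R] (c : R) : (C c - X).natDegree = 1 := by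
  rw [← neg_sub, natDegree_neg, natDegree_X_sub_C]

lemma leadingCoeff_C_sub_X {R : Type*} [Ring R] (c : R) : (C c - X).leadingCoeff = -1 := by
  rw [← neg_sub, leadingCoeff_neg, leadingCoeff_X_sub_C]

section Domain

variable {R : Type*} [CommRing R] [IsDomain R]

lemma natDegree_prod_C_sub_X {ι : Type*} (s : Finset ι) (c : ι → R) :
    (∏ k ∈ s, (C (c k) - X)).natDegree = #s := by
  rw [natDegree_prod _ _ fun k _ ↦ sub_ne_zero.2 (X_ne_C (c k)).symm]
  simp [natDegree_C_sub_X]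

lemma leadingCoeff_prod_C_sub_X {ι : Type*} (s : Finset ι) (c : ι → R) :
    (∏ k ∈ s, (C (c k) - X)).leadingCoeff = (-1) ^ #s := by
  simp [leadingCoeff_prod, leadingCoeff_C_sub_X]

lemma natDegree_X_mul_prod_C_sub_X {ι : Type*} (s : Finset ι) (c : ι → R) :
    (X * ∏ k ∈ s, (C (c k) - X)).natDegree = #s + 1 := by
  rw [natDegree_X_mul (leadingCoeff_ne_zero.1 (by simp [leadingCoeff_prod_C_sub_X])),
    natDegree_prod_C_sub_X]

lemma leadingCoeff_X_mul_prod_C_sub_X {ι : Type*} (s : Finset ι) (c : ι → R) :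
    (X * ∏ k ∈ s, (C (c k) - X)).leadingCoeff = (-1) ^ #s := by
  simp [leadingCoeff_prod_C_sub_X]

lemma mem_range_of_eval_eq_zero {p : R[X]} (hp : p ≠ 0) {n : ℕ} (hdeg : p.natDegree ≤ n)
    {s : Fin n → R} (hs : Function.Injective s) (hroots : ∀ i, p.eval (s i) = 0) {x : R}
    (hx : p.eval x = 0) : x ∈ Set.range s := by
  by_contra hxs
  refine hp (eq_zero_of_natDegree_lt_card_of_eval_eq_zero p (f := Fin.cons x s)
    (Fin.cons_injective_iff.2 ⟨hxs, hs⟩) (Fin.cases hx hroots) ?_)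
  simpa using Nat.lt_succ_of_le hdeg

end Domain

lemma eventually_atTop_leadingCoeff_mul_eval_pos {𝕜 : Type*} [NormedField 𝕜] [LinearOrder 𝕜]
    [IsStrictOrderedRing 𝕜] [OrderTopology 𝕜] {P : 𝕜[X]} (hdeg : 0 < P.degree) :
    ∀ᶠ x in atTop, 0 < P.leadingCoeff * P.eval x := by
  have hlc : P.leadingCoeff ≠ 0 := leadingCoeff_ne_zero.2 (ne_zero_of_degree_gt hdeg)
  have htendsto := (C P.leadingCoeff * P).tendsto_atTop_of_leadingCoeff_nonneg
    (by rwa [degree_C_mul hlc]) (by simpa using mul_self_nonneg P.leadingCoeff)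
  simpa using htendsto.eventually_gt_atTop 0

end Polynomial

section Qpoly

variable {N : ℕ} (θ a : Fin N → ℝ) (γ Ω : ℝ)

noncomputable def Qpolynomial : ℝ[X] :=
  X * ∏ ℓ, (C (θ ℓ + Ω) - X) +
    ∑ ℓ, C (γ * a ℓ) * ((X - C Ω) * ∏ k ∈ univ.erase ℓ, (C (θ k + Ω) - X))

lemma eval_Qpolynomial (s : ℝ) : (Qpolynomial θ a γ Ω).eval s = Qpoly N θ a γ Ω s := by
  simp only [Qpolynomial, Qpoly, eval_add, eval_mul, eval_X, eval_prod, eval_sub, eval_C,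
    eval_finsetSum, mul_sum]
  congr 1
  exact sum_congr rfl fun ℓ _ ↦ by ring

lemma natDegree_Qpolynomial_correction_lt :
    (∑ ℓ, C (γ * a ℓ) * ((X - C Ω) * ∏ k ∈ univ.erase ℓ, (C (θ k + Ω) - X))).natDegree <
      (X * ∏ ℓ, (C (θ ℓ + Ω) - X)).natDegree := by
  rw [natDegree_X_mul_prod_C_sub_X, Nat.lt_succ_iff]
  refine natDegree_sum_le_of_forall_le _ _ fun ℓ _ ↦ (natDegree_C_mul_le _ _).trans ?_
  refine natDegree_mul_le.trans ?_
  rw [natDegree_X_sub_C, natDegree_prod_C_sub_X, add_comm, card_erase_add_one (mem_univ ℓ)]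

lemma natDegree_Qpolynomial : (Qpolynomial θ a γ Ω).natDegree = N + 1 := by
  rw [Qpolynomial, natDegree_add_eq_left_of_natDegree_lt (natDegree_Qpolynomial_correction_lt ..),
    natDegree_X_mul_prod_C_sub_X, card_univ, Fintype.card_fin]

lemma leadingCoeff_Qpolynomial : (Qpolynomial θ a γ Ω).leadingCoeff = (-1) ^ N := by
  rw [Qpolynomial, leadingCoeff_add_of_degree_lt'
      (degree_lt_degree (natDegree_Qpolynomial_correction_lt ..)),
    leadingCoeff_X_mul_prod_C_sub_X, card_univ, Fintype.card_fin]

lemma eventually_neg_one_pow_mul_Qpoly_pos :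
    ∀ᶠ s in atTop, 0 < (-1) ^ N * Qpoly N θ a γ Ω s := by
  have hdeg : 0 < (Qpolynomial θ a γ Ω).degree := by
    rw [degree_eq_natDegree (leadingCoeff_ne_zero.1 (by simp [leadingCoeff_Qpolynomial])),
      natDegree_Qpolynomial]
    exact_mod_cast N.succ_pos
  simpa [leadingCoeff_Qpolynomial, eval_Qpolynomial] using
    eventually_atTop_leadingCoeff_mul_eval_pos hdeg

lemma continuous_Qpoly : Continuous (Qpoly N θ a γ Ω) :=
  (Qpolynomial θ a γ Ω).continuous.congr (eval_Qpolynomial θ a γ Ω)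

lemma mem_range_of_Qpoly_eq_zero {s : Fin (N + 1) → ℝ} (hs : Function.Injective s)
    (hroots : ∀ i, Qpoly N θ a γ Ω (s i) = 0) {y : ℝ} (hy : Qpoly N θ a γ Ω y = 0) :
    y ∈ Set.range s := by
  have hP : Qpolynomial θ a γ Ω ≠ 0 :=
    leadingCoeff_ne_zero.1 (by simp [leadingCoeff_Qpolynomial])
  simp only [← eval_Qpolynomial] at hroots hy
  exact mem_range_of_eval_eq_zero hP (natDegree_Qpolynomial θ a γ Ω).le hs hroots hy

lemma Qpoly_zero_neg (hN : 1 ≤ N) (hθpos : ∀ ℓ, 0 < θ ℓ) (hΩ : 0 < Ω) (hγ : 0 < γ)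
    (ha : ∀ ℓ, 0 < a ℓ) : Qpoly N θ a γ Ω 0 < 0 := by
  have hsum : 0 < ∑ ℓ, a ℓ * ∏ k ∈ univ.erase ℓ, (θ k + Ω - 0) :=
    sum_pos (fun ℓ _ ↦ mul_pos (ha ℓ) (prod_pos fun k _ ↦ by linarith [hθpos k]))
      (univ_nonempty_iff.2 ⟨⟨0, hN⟩⟩)
  have hQ0 : Qpoly N θ a γ Ω 0 = -(γ * Ω * ∑ ℓ, a ℓ * ∏ k ∈ univ.erase ℓ, (θ k + Ω - 0)) := by
    simp only [Qpoly]; ring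
  rw [hQ0]
  exact neg_neg_of_pos (by positivity)

lemma Qpoly_shifted_abscissa (ℓ : Fin N) :
    Qpoly N θ a γ Ω (θ ℓ + Ω) = γ * θ ℓ * a ℓ * ∏ k ∈ univ.erase ℓ, (θ k - θ ℓ) := by
  rw [Qpoly, prod_eq_zero (mem_univ ℓ) (sub_self _), mul_zero, zero_add,
    sum_eq_single ℓ (fun m _ hm ↦ ?_) (by simp)]
  · simp only [add_sub_add_right_eq_sub]
    ring
  · rw [prod_eq_zero (mem_erase.2 ⟨Ne.symm hm, mem_univ ℓ⟩) (sub_self _), mul_zero]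

lemma neg_one_pow_mul_Qpoly_shifted_abscissa_pos (hθpos : ∀ ℓ, 0 < θ ℓ)
    (hθmono : StrictMono θ) (hγ : 0 < γ) (ha : ∀ ℓ, 0 < a ℓ) (ℓ : Fin N) :
    0 < (-1) ^ (ℓ : ℕ) * Qpoly N θ a γ Ω (θ ℓ + Ω) := by
  rw [Qpoly_shifted_abscissa, mul_left_comm]
  exact mul_pos (by have := hθpos ℓ; have := ha ℓ; positivity)
    (hθmono.neg_one_pow_mul_prod_erase_sub_pos ℓ)

noncomputable def Qgrid (M : ℝ) : Fin (N + 2) → ℝ :=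
  Fin.snoc (Fin.cons 0 fun ℓ ↦ θ ℓ + Ω) M

variable {θ Ω} {M : ℝ}

lemma Qgrid_succ_castSucc (ℓ : Fin N) : Qgrid θ Ω M ℓ.succ.castSucc = θ ℓ + Ω := by
  simp only [Qgrid, Fin.snoc_castSucc, Fin.cons_succ]

lemma Qgrid_castSucc_nonneg (hθpos : ∀ ℓ, 0 < θ ℓ) (hΩ : 0 < Ω) (j : Fin (N + 1)) :
    0 ≤ Qgrid θ Ω M j.castSucc := by
  induction j using Fin.cases with
  | zero => simp [Qgrid]
  | succ ℓ => rw [Qgrid_succ_castSucc]; linarith [hθpos ℓ]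

lemma Qgrid_strictMono (hθpos : ∀ ℓ, 0 < θ ℓ) (hθmono : StrictMono θ) (hΩ : 0 < Ω)
    (hM0 : 0 < M) (hM : ∀ ℓ, θ ℓ + Ω < M) : StrictMono (Qgrid θ Ω M) :=
  (Fin.strictMono_cons.2 ⟨fun ℓ ↦ by linarith [hθpos ℓ],
    fun _ _ hij ↦ by simpa using hθmono hij⟩).finSnoc (Fin.cases hM0 hM)

lemma neg_one_pow_mul_Qpoly_Qgrid_pos (hN : 1 ≤ N) (hθpos : ∀ ℓ, 0 < θ ℓ)
    (hθmono : StrictMono θ) (hΩ : 0 < Ω) (hγ : 0 < γ) (ha : ∀ ℓ, 0 < a ℓ)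
    (hM : 0 < (-1) ^ N * Qpoly N θ a γ Ω M) (j : Fin (N + 2)) :
    0 < (-1) ^ ((j : ℕ) + 1) * Qpoly N θ a γ Ω (Qgrid θ Ω M j) := by
  induction j using Fin.lastCases with
  | last => simpa [Qgrid, pow_succ] using hM
  | cast j =>
    induction j using Fin.cases with
    | zero => simpa [Qgrid] using Qpoly_zero_neg θ a γ Ω hN hθpos hΩ hγ ha
    | succ ℓ =>
      rw [Qgrid_succ_castSucc]
      simpa [pow_succ] using
        neg_one_pow_mul_Qpoly_shifted_abscissa_pos θ a γ Ω hθpos hθmono hγ ha ℓ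

end Qpoly

theorem Qpoly_roots_interlace (N : ℕ) (hN : 1 ≤ N) (θ a : Fin N → ℝ)
    (hθpos : ∀ ℓ, 0 < θ ℓ) (hθmono : StrictMono θ)
    (Ω γ : ℝ) (hΩ : 0 < Ω) (hγ : 0 < γ) (ha : ∀ ℓ, 0 < a ℓ) :
    ∃ s : Fin (N + 1) → ℝ, StrictMono s ∧
      (∀ i, 0 < s i) ∧
      (∀ i, Qpoly N θ a γ Ω (s i) = 0) ∧
      (∀ x : ℝ, Qpoly N θ a γ Ω x = 0 → ∃ i, x = s i) ∧
      (∀ i : Fin N, s i.castSucc < θ i + Ω ∧ θ i + Ω < s i.succ) := by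
  obtain ⟨M, hM, hM0, hM_gt⟩ := ((eventually_neg_one_pow_mul_Qpoly_pos θ a γ Ω).and
    ((eventually_gt_atTop 0).and (eventually_all.2 fun ℓ ↦ eventually_gt_atTop (θ ℓ + Ω)))).exists
  have hsign := neg_one_pow_mul_Qpoly_Qgrid_pos a γ hN hθpos hθmono hΩ hγ ha hM
  obtain ⟨s, hs_mono, hs⟩ := exists_strictMono_zeros_of_sign_changes (continuous_Qpoly θ a γ Ω)
    (Qgrid_strictMono hθpos hθmono hΩ hM0 hM_gt)
    fun i ↦ mul_neg_of_neg_one_pow_mul_pos (hsign i.castSucc) (by simpa using hsign i.succ)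
  refine ⟨s, hs_mono, fun i ↦ (Qgrid_castSucc_nonneg hθpos hΩ i).trans_lt (hs i).2.1,
    fun i ↦ (hs i).1, fun y hy ↦ ?_, fun ℓ ↦ ⟨?_, ?_⟩⟩
  · obtain ⟨i, rfl⟩ := mem_range_of_Qpoly_eq_zero θ a γ Ω hs_mono.injective (fun i ↦ (hs i).1) hy
    exact ⟨i, rfl⟩
  · simpa only [Fin.succ_castSucc, Qgrid_succ_castSucc] using (hs ℓ.castSucc).2.2
  · simpa only [Qgrid_succ_castSucc] using (hs ℓ.succ).2.1
end

section
/- Let N ≥ 1, θ_ℓ > 0, a_ℓ > 0 for ℓ = 1,…,N, Ω₁, Ω₃ > 0, γ₁, γ₃ > 0, ρ > ρ_f > 0. Then zero is an eigenvalue of multiplicity exactly 6 of the (2N+8)×(2N+8) Biot-DA diffusive matrix S (as defined in the paper with blocks S₁, S₂, S₃), and all nonzero eigenvalues of S are real and positive. -/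
open Matrix Polynomial

section BiotDA

variable (N : ℕ)

/-- Index of the `ℓ`-th pair in the memory-variable block: even indices `2ℓ` carry the
`x`-direction (`i = 1`) memory variables, odd indices `2ℓ+1` the `z`-direction (`i = 3`) ones. -/
def pairIdx (j : Fin (2 * N)) : Fin N := ⟨j.val / 2, by omega⟩

/-- Block `S₁` (4 × 2N) of the Biot-DA diffusive matrix. -/
noncomputable def S1blk (ρ ρf γ1 γ3 : ℝ) (a1 a3 : Fin N → ℝ) :
    Matrix (Fin 4) (Fin (2 * N)) ℝ := fun i j =>
  if j.val % 2 = 0 then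
    if i = 0 then -(ρf / ρ) * γ1 * a1 (pairIdx N j)
    else if i = 2 then γ1 * a1 (pairIdx N j) else 0
  else
    if i = 1 then -(ρf / ρ) * γ3 * a3 (pairIdx N j)
    else if i = 3 then γ3 * a3 (pairIdx N j) else 0

/-- Block `S₂` (2N × 2N) of the Biot-DA diffusive matrix. -/
noncomputable def S2blk (γ1 γ3 Ω1 Ω3 : ℝ) (θ1 θ3 a1 a3 : Fin N → ℝ) :
    Matrix (Fin (2 * N)) (Fin (2 * N)) ℝ := fun j k =>
  (if j.val % 2 = k.val % 2 then
      (if k.val % 2 = 0 then γ1 * a1 (pairIdx N k) else γ3 * a3 (pairIdx N k))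
    else 0) +
  (if j = k then
      (if j.val % 2 = 0 then θ1 (pairIdx N j) + Ω1 else θ3 (pairIdx N j) + Ω3)
    else 0)

/-- Block `S₃` (2N × 4) of the Biot-DA diffusive matrix. -/
noncomputable def S3blk (Ω1 Ω3 : ℝ) : Matrix (Fin (2 * N)) (Fin 4) ℝ := fun j i =>
  if j.val % 2 = 0 ∧ i = 2 then -Ω1
  else if j.val % 2 = 1 ∧ i = 3 then -Ω3 else 0

/-- The `(2N+8) × (2N+8)` Biot-DA diffusive matrix `S`, indexed by
`(v_{s1}, v_{s3}, w₁, w₃) ⊕ (σ₁₁, σ₁₃, σ₃₃, p) ⊕ (memory variables)`. -/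
noncomputable def SBiotDA (ρ ρf γ1 γ3 Ω1 Ω3 : ℝ) (θ1 θ3 a1 a3 : Fin N → ℝ) :
    Matrix (Fin 4 ⊕ Fin 4 ⊕ Fin (2 * N)) (Fin 4 ⊕ Fin 4 ⊕ Fin (2 * N)) ℝ :=
  fun p q =>
    match p, q with
    | .inl i, .inr (.inr j) => S1blk N ρ ρf γ1 γ3 a1 a3 i j
    | .inr (.inr j), .inl i => S3blk N Ω1 Ω3 j i
    | .inr (.inr j), .inr (.inr k) => S2blk N γ1 γ3 Ω1 Ω3 θ1 θ3 a1 a3 j k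
    | _, _ => 0

end BiotDA

/-!
After reordering the unknowns, `S` is block lower triangular with diagonal blocks `S̃₁`, `S̃₃`
and a `6 × 6` zero block, so `χ_S = χ_{S̃₁} χ_{S̃₃} X⁶`. Each block
`S̃ᵢ = [[0, cᵀ], [-Ω 𝟙, 𝟙 cᵀ + diag (θ + Ω)]]` with `c, θ, Ω > 0` has only positive real
eigenvalues: for an eigenvector `(u, y)` with eigenvalue `z`, subtracting the first row from the
others gives `θ_l y_l + Ω (y_l - u) = z (y_l - u)`; pairing these with
`(c_l / θ_l) conj (y_l - u)` and the first row with `conj u` yields the energy identity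
`z (|u|² + ∑ c_l/θ_l |y_l - u|²) = ∑ c_l |y_l|² + Ω ∑ c_l/θ_l |y_l - u|²`,
whose right-hand side is positive as soon as `N ≥ 1`.
-/

open ComplexConjugate

theorem Matrix.exists_mulVec_eq_smul_of_isRoot_charpoly {n K : Type*} [Fintype n]
    [DecidableEq n] [Field K] {M : Matrix n n K} {z : K} (h : M.charpoly.IsRoot z) :
    ∃ v ≠ 0, M *ᵥ v = z • v := by
  rw [← charpoly_toLin', ← Module.End.hasEigenvalue_iff_isRoot_charpoly] at h
  obtain ⟨v, hv⟩ := h.exists_hasEigenvector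
  exact ⟨v, hv.2, by simpa using hv.apply_eq_smul⟩

section MemoryBlock

variable {ι : Type*} [Fintype ι]

/-- The hypotheses `hu`, `hy` are the eigenvalue equations of `memoryBlock Ω c θ` below for an
eigenvector `(u, y)`, with the first row subtracted from the others. -/
theorem exists_pos_of_memory_equations [Nonempty ι] {Ω : ℝ} {c θ : ι → ℝ}
    (hΩ : 0 < Ω) (hc : ∀ l, 0 < c l) (hθ : ∀ l, 0 < θ l) {z u : ℂ} {y : ι → ℂ}
    (hu : ∑ l, (c l : ℂ) * y l = z * u)
    (hy : ∀ l, (θ l : ℂ) * y l + Ω * (y l - u) = z * (y l - u))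
    (hne : u ≠ 0 ∨ ∃ l, y l ≠ 0) :
    ∃ x : ℝ, 0 < x ∧ z = x := by
  set L : ℝ := Complex.normSq u + ∑ l, c l / θ l * Complex.normSq (y l - u)
  set R : ℝ :=
    ∑ l, c l * Complex.normSq (y l) + Ω * ∑ l, c l / θ l * Complex.normSq (y l - u)
  have henergy : z * L = R := by
    have hterm : ∀ l, z * ((c l / θ l : ℝ) * Complex.normSq (y l - u)) =
        c l * Complex.normSq (y l) - conj u * (c l * y l) +
          Ω * ((c l / θ l : ℝ) * Complex.normSq (y l - u)) := by
      intro l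
      have hθl : (θ l : ℂ) ≠ 0 := by exact_mod_cast (hθ l).ne'
      simp only [← Complex.mul_conj, map_sub, Complex.ofReal_div]
      field_simp
      linear_combination (c l : ℂ) * (conj (y l) - conj u) * (hy l).symm
    have hhub : z * Complex.normSq u = conj u * ∑ l, c l * y l := by
      rw [hu, ← Complex.mul_conj]; ring
    simp only [L, R, Complex.ofReal_add, Complex.ofReal_sum, Complex.ofReal_mul, mul_add,
      Finset.mul_sum, hhub, hterm, Finset.sum_add_distrib, Finset.sum_sub_distrib]
    push_cast
    ring
  have hy_nonneg : ∀ l, 0 ≤ c l * Complex.normSq (y l) := fun l =>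
    mul_nonneg (hc l).le (Complex.normSq_nonneg _)
  have he_nonneg : ∀ l, 0 ≤ c l / θ l * Complex.normSq (y l - u) := fun l =>
    mul_nonneg (div_nonneg (hc l).le (hθ l).le) (Complex.normSq_nonneg _)
  have hL : 0 ≤ L :=
    add_nonneg (Complex.normSq_nonneg _) (Finset.sum_nonneg fun l _ => he_nonneg l)
  have hR : 0 < R := by
    have hwit : ∃ l, y l ≠ 0 ∨ y l - u ≠ 0 := by
      obtain hu0 | ⟨l, hl⟩ := hne
      · obtain ⟨l₀⟩ := ‹Nonempty ι›
        by_cases hl₀ : y l₀ = 0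
        · exact ⟨l₀, Or.inr (by simpa [hl₀] using hu0)⟩
        · exact ⟨l₀, Or.inl hl₀⟩
      · exact ⟨l, Or.inl hl⟩
    obtain ⟨l, hl | hl⟩ := hwit
    · refine add_pos_of_pos_of_nonneg
        (Finset.sum_pos' (fun l _ => hy_nonneg l) ⟨l, by simp, ?_⟩)
        (mul_nonneg hΩ.le (Finset.sum_nonneg fun l _ => he_nonneg l))
      exact mul_pos (hc l) (Complex.normSq_pos.2 hl)
    · refine add_pos_of_nonneg_of_pos (Finset.sum_nonneg fun l _ => hy_nonneg l)
        (mul_pos hΩ (Finset.sum_pos' (fun l _ => he_nonneg l) ⟨l, by simp, ?_⟩))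
      exact mul_pos (div_pos (hc l) (hθ l)) (Complex.normSq_pos.2 hl)
  have hLpos : 0 < L := by
    refine hL.lt_of_ne fun h => hR.ne' ?_
    exact_mod_cast (by rw [← henergy, ← h]; simp : ((R : ℝ) : ℂ) = 0)
  refine ⟨R / L, div_pos hR hLpos, ?_⟩
  rw [Complex.ofReal_div, ← henergy, mul_div_cancel_right₀ _ (by exact_mod_cast hLpos.ne')]

variable [DecidableEq ι]

/-- The blocks `S̃₁`, `S̃₃` of `S`: the first index stands for `w_i`, the others for the memory
variables of direction `i`. -/
def memoryBlock (Ω : ℝ) (c θ : ι → ℝ) : Matrix (Unit ⊕ ι) (Unit ⊕ ι) ℝ :=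
  fromBlocks 0 (replicateRow Unit c) (replicateCol Unit fun _ => -Ω)
    (replicateRow ι c + diagonal fun l => θ l + Ω)

theorem exists_pos_of_isRoot_charpoly_memoryBlock [Nonempty ι] {Ω : ℝ} {c θ : ι → ℝ}
    (hΩ : 0 < Ω) (hc : ∀ l, 0 < c l) (hθ : ∀ l, 0 < θ l) {z : ℂ}
    (h : ((memoryBlock Ω c θ).map Complex.ofReal).charpoly.IsRoot z) :
    ∃ x : ℝ, 0 < x ∧ z = x := by
  obtain ⟨v, hv, hMv⟩ := exists_mulVec_eq_smul_of_isRoot_charpoly h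
  have hhub := congrFun hMv (.inl ())
  have hmem := fun l => congrFun hMv (.inr l)
  simp [memoryBlock, mulVec, dotProduct, Fintype.sum_sum_type, fromBlocks, diagonal_apply,
    add_mul, Finset.sum_add_distrib, apply_ite Complex.ofReal, ite_mul] at hhub hmem
  refine exists_pos_of_memory_equations hΩ hc hθ hhub (fun l => ?_) ?_
  · linear_combination hmem l - hhub
  · by_contra! hzero
    exact hv (funext fun | .inl () => hzero.1 | .inr l => hzero.2 l)

end MemoryBlock

/-- Reordering of the unknowns that makes `S` block lower triangular: `w₁` with the even memory
variables, `w₃` with the odd ones, then the velocities `v_{s1}, v_{s3}` and the stresses, whose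
columns of `S` vanish. -/
def biotDAIndexEquiv (N : ℕ) :
    (Unit ⊕ Fin N) ⊕ (Unit ⊕ Fin N) ⊕ Fin 2 ⊕ Fin 4 ≃ Fin 4 ⊕ Fin 4 ⊕ Fin (2 * N) where
  toFun
    | .inl (.inl ()) => .inl 2
    | .inl (.inr l) => .inr (.inr ⟨2 * l, by omega⟩)
    | .inr (.inl (.inl ())) => .inl 3
    | .inr (.inl (.inr l)) => .inr (.inr ⟨2 * l + 1, by omega⟩)
    | .inr (.inr (.inl i)) => .inl (Fin.castLE (by omega) i)
    | .inr (.inr (.inr i)) => .inr (.inl i)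
  invFun
    | .inl i =>
      ![.inr (.inr (.inl 0)), .inr (.inr (.inl 1)), .inl (.inl ()), .inr (.inl (.inl ()))] i
    | .inr (.inl i) => .inr (.inr (.inr i))
    | .inr (.inr j) =>
      if j.val % 2 = 0 then .inl (.inr ⟨j / 2, by omega⟩)
      else .inr (.inl (.inr ⟨j / 2, by omega⟩))
  left_inv := by
    rintro ((_ | l) | (_ | l) | i | i)
    · rfl
    · simp
    · rfl
    · simp [Fin.ext_iff]; omega
    · fin_cases i <;> rfl
    · rfl
  right_inv := by
    rintro (i | i | j)
    · fin_cases i <;> rfl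
    · rfl
    · by_cases hj : j.val % 2 = 0 <;> simp [hj, Fin.ext_iff] <;> omega

@[simp] theorem pairIdx_two_mul {N : ℕ} (l : Fin N) (h : 2 * (l : ℕ) < 2 * N) :
    pairIdx N ⟨2 * l, h⟩ = l :=
  Fin.ext (by simp [pairIdx])

@[simp] theorem pairIdx_two_mul_add_one {N : ℕ} (l : Fin N) (h : 2 * (l : ℕ) + 1 < 2 * N) :
    pairIdx N ⟨2 * l + 1, h⟩ = l :=
  Fin.ext (by simp [pairIdx]; omega)

theorem charpoly_SBiotDA (N : ℕ) (ρ ρf γ1 γ3 Ω1 Ω3 : ℝ) (θ1 θ3 a1 a3 : Fin N → ℝ) :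
    (SBiotDA N ρ ρf γ1 γ3 Ω1 Ω3 θ1 θ3 a1 a3).charpoly =
      (memoryBlock Ω1 (γ1 • a1) θ1).charpoly *
        ((memoryBlock Ω3 (γ3 • a3) θ3).charpoly * X ^ 6) := by
  set M := (SBiotDA N ρ ρf γ1 γ3 Ω1 Ω3 θ1 θ3 a1 a3).submatrix
    (biotDAIndexEquiv N) (biotDAIndexEquiv N)
  have h₁₁ : M.toBlocks₁₁ = memoryBlock Ω1 (γ1 • a1) θ1 := by
    ext (_ | l) (_ | k) <;> simp [M, memoryBlock, biotDAIndexEquiv, SBiotDA, S1blk, S2blk,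
      S3blk, toBlocks₁₁, fromBlocks, diagonal_apply, Fin.val_inj]
  have h₁₂ : M.toBlocks₁₂ = 0 := by
    ext (_ | l) ((_ | k) | i | i) <;>
      simp [M, biotDAIndexEquiv, SBiotDA, S1blk, S2blk, S3blk, toBlocks₁₂]
    · omega
    · fin_cases i <;> simp
  have h₂₂₁₁ : M.toBlocks₂₂.toBlocks₁₁ = memoryBlock Ω3 (γ3 • a3) θ3 := by
    ext (_ | l) (_ | k) <;> simp [M, memoryBlock, biotDAIndexEquiv, SBiotDA, S1blk, S2blk,
      S3blk, toBlocks₁₁, toBlocks₂₂, fromBlocks, diagonal_apply, Fin.val_inj]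
  have h₂₂₁₂ : M.toBlocks₂₂.toBlocks₁₂ = 0 := by
    ext (_ | l) (i | i) <;>
      simp [M, biotDAIndexEquiv, SBiotDA, S1blk, S2blk, S3blk, toBlocks₁₂, toBlocks₂₂]
    all_goals fin_cases i <;> simp
  have h₂₂₂₂ : M.toBlocks₂₂.toBlocks₂₂ = 0 := by
    ext (i | i) (j | j) <;>
      simp [M, biotDAIndexEquiv, SBiotDA, S1blk, S2blk, S3blk, toBlocks₂₂]
  rw [← charpoly_reindex (biotDAIndexEquiv N).symm, reindex_apply, Equiv.symm_symm]
  change M.charpoly = _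
  rw [← fromBlocks_toBlocks M, h₁₂, charpoly_fromBlocks_zero₁₂, h₁₁,
    ← fromBlocks_toBlocks M.toBlocks₂₂, h₂₂₁₂, h₂₂₂₂, charpoly_fromBlocks_zero₁₂, h₂₂₁₁,
    charpoly_zero]
  rfl

theorem SBiotDA_spectrum_general (N : ℕ) (hN : 1 ≤ N)
    (ρ ρf γ1 γ3 Ω1 Ω3 : ℝ) (θ1 θ3 a1 a3 : Fin N → ℝ)
    (hγ1 : 0 < γ1) (hγ3 : 0 < γ3) (hΩ1 : 0 < Ω1) (hΩ3 : 0 < Ω3)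
    (hθ1 : ∀ ℓ, 0 < θ1 ℓ) (hθ3 : ∀ ℓ, 0 < θ3 ℓ)
    (ha1 : ∀ ℓ, 0 < a1 ℓ) (ha3 : ∀ ℓ, 0 < a3 ℓ) :
    ((SBiotDA N ρ ρf γ1 γ3 Ω1 Ω3 θ1 θ3 a1 a3).map (Complex.ofReal)).charpoly.rootMultiplicity 0
        = 6 ∧
    ∀ z : ℂ,
      ((SBiotDA N ρ ρf γ1 γ3 Ω1 Ω3 θ1 θ3 a1 a3).map (Complex.ofReal)).charpoly.IsRoot z →
        z ≠ 0 → ∃ x : ℝ, 0 < x ∧ z = (x : ℂ) := by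
  have : Nonempty (Fin N) := ⟨⟨0, hN⟩⟩
  set p₁ := ((memoryBlock Ω1 (γ1 • a1) θ1).map Complex.ofReal).charpoly
  set p₃ := ((memoryBlock Ω3 (γ3 • a3) θ3).map Complex.ofReal).charpoly
  have hfactor :
      ((SBiotDA N ρ ρf γ1 γ3 Ω1 Ω3 θ1 θ3 a1 a3).map Complex.ofReal).charpoly =
        p₁ * (p₃ * X ^ 6) := by
    have h := congrArg (map Complex.ofRealHom)
      (charpoly_SBiotDA N ρ ρf γ1 γ3 Ω1 Ω3 θ1 θ3 a1 a3)
    simp only [Polynomial.map_mul, Polynomial.map_pow, map_X, ← charpoly_map] at h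
    exact h
  have hp₁ : ∀ z, p₁.IsRoot z → ∃ x : ℝ, 0 < x ∧ z = x := fun _ =>
    exists_pos_of_isRoot_charpoly_memoryBlock (c := γ1 • a1) hΩ1
      (fun l => mul_pos hγ1 (ha1 l)) hθ1
  have hp₃ : ∀ z, p₃.IsRoot z → ∃ x : ℝ, 0 < x ∧ z = x := fun _ =>
    exists_pos_of_isRoot_charpoly_memoryBlock (c := γ3 • a3) hΩ3
      (fun l => mul_pos hγ3 (ha3 l)) hθ3
  have not_isRoot_zero {p : ℂ[X]} (hp : ∀ z, p.IsRoot z → ∃ x : ℝ, 0 < x ∧ z = x) :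
      ¬ p.IsRoot 0 := fun h => by
    obtain ⟨x, hx, hx0⟩ := hp 0 h
    exact hx.ne (by exact_mod_cast hx0)
  have hmonic₃ : (p₃ * X ^ 6).Monic := (charpoly_monic _).mul (monic_X_pow 6)
  have hmonic : (p₁ * (p₃ * X ^ 6)).Monic := (charpoly_monic _).mul hmonic₃
  rw [hfactor]
  refine ⟨?_, fun z hz hz0 => ?_⟩
  · rw [rootMultiplicity_mul hmonic.ne_zero, rootMultiplicity_mul hmonic₃.ne_zero,
      rootMultiplicity_eq_zero (not_isRoot_zero hp₁),
      rootMultiplicity_eq_zero (not_isRoot_zero hp₃)]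
    simpa using rootMultiplicity_X_sub_C_pow (0 : ℂ) 6
  · obtain h₁ | h₃ | hX := by simpa only [root_mul] using hz
    · exact hp₁ z h₁
    · exact hp₃ z h₃
    · exact absurd (by simpa using hX) hz0

theorem SBiotDA_spectrum (N : ℕ) (hN : 1 ≤ N)
    (ρ ρf γ1 γ3 Ω1 Ω3 : ℝ) (θ1 θ3 a1 a3 : Fin N → ℝ)
    (hρf : 0 < ρf) (hρ : ρf < ρ)
    (hγ1 : 0 < γ1) (hγ3 : 0 < γ3) (hΩ1 : 0 < Ω1) (hΩ3 : 0 < Ω3)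
    (hθ1 : ∀ ℓ, 0 < θ1 ℓ) (hθ3 : ∀ ℓ, 0 < θ3 ℓ)
    (ha1 : ∀ ℓ, 0 < a1 ℓ) (ha3 : ∀ ℓ, 0 < a3 ℓ) :
    ((SBiotDA N ρ ρf γ1 γ3 Ω1 Ω3 θ1 θ3 a1 a3).map (Complex.ofReal)).charpoly.rootMultiplicity 0
        = 6 ∧
    ∀ z : ℂ,
      ((SBiotDA N ρ ρf γ1 γ3 Ω1 Ω3 θ1 θ3 a1 a3).map (Complex.ofReal)).charpoly.IsRoot z →
        z ≠ 0 → ∃ x : ℝ, 0 < x ∧ z = (x : ℂ) :=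
  SBiotDA_spectrum_general N hN ρ ρf γ1 γ3 Ω1 Ω3 θ1 θ3 a1 a3 hγ1 hγ3 hΩ1 hΩ3 hθ1 hθ3 ha1 ha3
end
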